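/- arXiv:2512.10877 — 2 statements merged into one kernel-verified Lean document; each statement's English description precedes it below -/
import Mathlib

section
/- Let x → z_s → z_t be a Markov chain on finite sets under distribution p with all relevant probabilities positive, and let r(x) = q(x)/p(x) for a second distribution q on x. Define α(x, z_t) = p(x | z_t) · r(x). Then Σ_x α(x, z_t) · p(z_s | z_t, x) = p(z_t | z_s) · q(z_s) / p(z_t), where q(z_s) = Σ_x p(z_s | x) q(x). -/
open Finset

/-- Key identity in the proof of Theorem 1:
`Σ_x α(x, z_t) p(z_s | z_t, x) = p(z_t | z_s) q(z_s) / p(z_t)`. -/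
theorem gtl_alpha_sum_identity
    {X Zs Zt : Type*} [Fintype X] [Fintype Zs] [Fintype Zt]
    (p q : X → ℝ) (ks : X → Zs → ℝ) (kt : Zs → Zt → ℝ)
    (hp : ∀ x, 0 < p x) (hpsum : ∑ x, p x = 1)
    (hq : ∀ x, 0 ≤ q x) (hqsum : ∑ x, q x = 1)
    (hks : ∀ x zs, 0 < ks x zs) (hkssum : ∀ x, ∑ zs, ks x zs = 1)
    (hkt : ∀ zs zt, 0 < kt zs zt) (hktsum : ∀ zs, ∑ zt, kt zs zt = 1)
    (zs : Zs) (zt : Zt)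
    -- r(x) = q(x)/p(x); p(z_t) = Σ_x Σ_{z_s} p(x) ks(z_s|x) kt(z_t|z_s);
    -- p(x | z_t) = p(x) (Σ_{z_s'} ks(z_s'|x) kt(z_t|z_s')) / p(z_t);
    -- α(x, z_t) = p(x | z_t) · r(x);
    -- p(z_s | z_t, x) = ks(z_s|x) kt(z_t|z_s) / Σ_{z_s'} ks(z_s'|x) kt(z_t|z_s').
    :
    (∑ x, ((p x * ∑ zs', ks x zs' * kt zs' zt)
              / (∑ x', ∑ zs', p x' * ks x' zs' * kt zs' zt))
          * (q x / p x)
          * (ks x zs * kt zs zt / (∑ zs', ks x zs' * kt zs' zt)))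
      = kt zs zt * (∑ x, ks x zs * q x)
          / (∑ x', ∑ zs', p x' * ks x' zs' * kt zs' zt) := by
  haveI : Nonempty Zs := ⟨zs⟩
  haveI : Nonempty X := by
    by_contra h
    rw [not_nonempty_iff] at h
    simp [Finset.univ_eq_empty] at hpsum
  have hS : ∀ x, (0:ℝ) < ∑ zs', ks x zs' * kt zs' zt := fun x =>
    Finset.sum_pos (fun zs' _ => mul_pos (hks x zs') (hkt zs' zt)) Finset.univ_nonempty
  have hP : (0:ℝ) < ∑ x', ∑ zs', p x' * ks x' zs' * kt zs' zt :=
    Finset.sum_pos (fun x _ => Finset.sum_pos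
      (fun zs' _ => mul_pos (mul_pos (hp x) (hks x zs')) (hkt zs' zt)) Finset.univ_nonempty)
      Finset.univ_nonempty
  have key : ∀ x, ((p x * ∑ zs', ks x zs' * kt zs' zt)
              / (∑ x', ∑ zs', p x' * ks x' zs' * kt zs' zt))
          * (q x / p x)
          * (ks x zs * kt zs zt / (∑ zs', ks x zs' * kt zs' zt))
      = kt zs zt * (ks x zs * q x) / (∑ x', ∑ zs', p x' * ks x' zs' * kt zs' zt) := by
    intro x
    have h1 : (∑ zs', ks x zs' * kt zs' zt) ≠ 0 := (hS x).ne'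
    have h2 : (∑ x', ∑ zs', p x' * ks x' zs' * kt zs' zt) ≠ 0 := hP.ne'
    have h3 : p x ≠ 0 := (hp x).ne'
    field_simp
  rw [Finset.sum_congr rfl (fun x _ => key x), ← Finset.sum_div, ← Finset.mul_sum]
end

section
/- Let x → z_s → z_t be a Markov chain on finite sets under p (with positive probabilities), let q be another distribution on x with ratio r(x) = q(x)/p(x), and let r̄(z_s) = E_{x ∼ p(·|z_s)}[r(x)]. Then the distribution q*(z_s | z_t) := p(z_s | z_t) r̄(z_s) / Σ_{z̃} p(z̃ | z_t) r̄(z̃) is exactly the backward conditional q(z_s | z_t) of the target process, i.e., of the Markov chain with initial law q and the same forward kernels. -/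
open Finset

/-- Theorem 1 (GTL), closed form: reweighting the source reverse transition
`p(z_s | z_t)` by the posterior-expected ratio `r̄(z_s)` and normalizing
recovers the target reverse transition `q(z_s | z_t)`. -/
theorem gtl_ratio_guided_recovers_target_backward
    {X Zs Zt : Type*} [Fintype X] [Fintype Zs] [Fintype Zt]
    (p q : X → ℝ) (ks : X → Zs → ℝ) (kt : Zs → Zt → ℝ)
    (hp : ∀ x, 0 < p x) (hpsum : ∑ x, p x = 1)
    (hq : ∀ x, 0 < q x) (hqsum : ∑ x, q x = 1)
    (hks : ∀ x zs, 0 < ks x zs) (hkssum : ∀ x, ∑ zs, ks x zs = 1)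
    (hkt : ∀ zs zt, 0 < kt zs zt) (hktsum : ∀ zs, ∑ zt, kt zs zt = 1)
    -- marginals of z_s under source and target
    (pZs qZs : Zs → ℝ)
    (hpZs : ∀ zs, pZs zs = ∑ x, ks x zs * p x)
    (hqZs : ∀ zs, qZs zs = ∑ x, ks x zs * q x)
    -- marginals of z_t under source and target
    (pZt qZt : Zt → ℝ)
    (hpZt : ∀ zt, pZt zt = ∑ zs, kt zs zt * pZs zs)
    (hqZt : ∀ zt, qZt zt = ∑ zs, kt zs zt * qZs zs)
    -- source backward transition p(z_s | z_t)
    (pback : Zs → Zt → ℝ)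
    (hpback : ∀ zs zt, pback zs zt = pZs zs * kt zs zt / pZt zt)
    -- r̄(z_s) = E_{x ∼ p(·|z_s)}[q(x)/p(x)]
    (rbar : Zs → ℝ)
    (hrbar : ∀ zs, rbar zs = ∑ x, (ks x zs * p x / pZs zs) * (q x / p x))
    (zs : Zs) (zt : Zt) :
    pback zs zt * rbar zs / (∑ zs', pback zs' zt * rbar zs')
      = qZs zs * kt zs zt / qZt zt := by
  have hXne : Nonempty X := by
    by_contra h
    rw [not_nonempty_iff] at h
    simp [Finset.sum_of_isEmpty] at hpsum
  have hpZspos : ∀ z, 0 < pZs z := fun z => by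
    rw [hpZs]
    exact Finset.sum_pos (fun x _ => mul_pos (hks x z) (hp x)) (by simp)
  have hqZspos : ∀ z, 0 < qZs z := fun z => by
    rw [hqZs]
    exact Finset.sum_pos (fun x _ => mul_pos (hks x z) (hq x)) (by simp)
  have hZsne : Nonempty Zs := by
    by_contra h
    rw [not_nonempty_iff] at h
    have := hkssum (Classical.arbitrary X)
    simp at this
  have hpZtpos : 0 < pZt zt := by
    rw [hpZt]
    exact Finset.sum_pos (fun z _ => mul_pos (hkt z zt) (hpZspos z)) (by simp)
  have hqZtpos : 0 < qZt zt := by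
    rw [hqZt]
    exact Finset.sum_pos (fun z _ => mul_pos (hkt z zt) (hqZspos z)) (by simp)
  have hrbar' : ∀ z, rbar z = qZs z / pZs z := fun z => by
    rw [hrbar, hqZs]
    rw [Finset.sum_div]
    refine Finset.sum_congr rfl fun x _ => ?_
    have h1 : p x ≠ 0 := (hp x).ne'
    have h2 : pZs z ≠ 0 := (hpZspos z).ne'
    field_simp
  have key : ∀ z, pback z zt * rbar z = kt z zt * qZs z / pZt zt := fun z => by
    rw [hpback, hrbar']
    have h1 : pZs z ≠ 0 := (hpZspos z).ne'
    have h2 : pZt zt ≠ 0 := hpZtpos.ne'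
    field_simp
  have hsum : (∑ zs', pback zs' zt * rbar zs') = qZt zt / pZt zt := by
    simp only [key]
    rw [← Finset.sum_div, hqZt]
  rw [hsum, key]
  have h1 : pZt zt ≠ 0 := hpZtpos.ne'
  have h2 : qZt zt ≠ 0 := hqZtpos.ne'
  field_simp
end
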